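/- Let $K$ be a triangle obtained from the right triangle $K_1$ with legs along the axes of lengths $h_1\ge h_2>0$ by the linear map $A=\begin{pmatrix}1&s\\0&t\end{pmatrix}$, $s^2+t^2=1$, $t>0$. For $\hat v\in W^{1,\infty}(K_1)$ and $v(\mathbf{x}):=\hat v(A^{-1}\mathbf{x})$ on $K$, the Lagrange interpolants satisfy $|\mathcal{I}_K^L v|_{1,\infty,K} \le \frac{4}{\sin\theta_K}|v|_{1,\infty,K}$, where $\theta_K$ is the maximum inner angle of $K$. -/

import Mathlib

/-! The angle of `K` at the origin has cosine `s`, so `sin θ_K = t`. A bound `M` on the partial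
derivatives of `v` over the convex set `K` bounds the operator norm of `Dv` by `2M` for the sup
norm of `ℝ²`, so by the mean value inequality `v` changes by at most `2M h₁` along the edge
`p₁p₂` and by at most `2M h₂` along `p₁p₃`. Solving the interpolation equations,
`P = (v p₂ - v p₁) / h₁` and `Q = (v p₃ - v p₁ - P h₂ s) / (h₂ t)`, whence `|P| ≤ 2M` and
`|Q| ≤ 4M / t`. -/

open Real

/-- The (unoriented) angle between two vectors of `ℝ²`. -/
noncomputable def vecAngle (u v : ℝ × ℝ) : ℝ :=
  Real.arccos ((u.1 * v.1 + u.2 * v.2) /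
    (Real.sqrt (u.1 ^ 2 + u.2 ^ 2) * Real.sqrt (v.1 ^ 2 + v.2 ^ 2)))

lemma sin_vecAngle_of_sq_add_sq_eq_one {h₁ h₂ s t : ℝ} (hh₁ : 0 < h₁) (hh₂ : 0 < h₂)
    (hst : s ^ 2 + t ^ 2 = 1) (ht : 0 ≤ t) :
    Real.sin (vecAngle (h₁, 0) (h₂ * s, h₂ * t)) = t := by
  have hcos : h₁ * (h₂ * s) / (h₁ * h₂) = s := by field_simp
  simp only [vecAngle, zero_mul, add_zero, zero_pow two_ne_zero, sqrt_sq hh₁.le]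
  rw [show (h₂ * s) ^ 2 + (h₂ * t) ^ 2 = h₂ ^ 2 by linear_combination h₂ ^ 2 * hst,
    sqrt_sq hh₂.le, hcos, sin_arccos, show 1 - s ^ 2 = t ^ 2 by linarith, sqrt_sq ht]

lemma ContinuousLinearMap.opNorm_prod_le_norm_apply_add_norm_apply {F : Type*}
    [NormedAddCommGroup F] [NormedSpace ℝ F] (L : ℝ × ℝ →L[ℝ] F) :
    ‖L‖ ≤ ‖L (1, 0)‖ + ‖L (0, 1)‖ := by
  refine L.opNorm_le_bound (by positivity) fun w => ?_
  have hw : w = w.1 • ((1 : ℝ), (0 : ℝ)) + w.2 • ((0 : ℝ), (1 : ℝ)) := by ext <;> simp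
  calc ‖L w‖ = ‖w.1 • L (1, 0) + w.2 • L (0, 1)‖ := by
        conv_lhs => rw [hw]
        rw [map_add, map_smul, map_smul]
    _ ≤ ‖w.1‖ * ‖L (1, 0)‖ + ‖w.2‖ * ‖L (0, 1)‖ := by
        grw [norm_add_le, norm_smul, norm_smul]
    _ ≤ ‖w‖ * ‖L (1, 0)‖ + ‖w‖ * ‖L (0, 1)‖ := by
        gcongr
        exacts [le_max_left _ _, le_max_right _ _]
    _ = (‖L (1, 0)‖ + ‖L (0, 1)‖) * ‖w‖ := by ring

lemma IsCompact.le_ciSup_of_continuousOn {X : Type*} [TopologicalSpace X] {K : Set X}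
    (hK : IsCompact K) {g : X → ℝ} (hg : ContinuousOn g K) {x : X} (hx : x ∈ K) :
    g x ≤ ⨆ z : K, g z :=
  le_ciSup (Set.image_eq_range g K ▸ hK.bddAbove_image hg) ⟨x, hx⟩

lemma ContDiffOn.max_abs_fderiv_apply_le_iSup {v : ℝ × ℝ → ℝ} {U K : Set (ℝ × ℝ)}
    (hv : ContDiffOn ℝ 1 v U) (hU : IsOpen U) (hK : IsCompact K) (hKU : K ⊆ U)
    {x : ℝ × ℝ} (hx : x ∈ K) :
    max |fderiv ℝ v x (1, 0)| |fderiv ℝ v x (0, 1)| ≤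
      ⨆ z : K, max |fderiv ℝ v (z : ℝ × ℝ) (1, 0)| |fderiv ℝ v (z : ℝ × ℝ) (0, 1)| := by
  have hDv := (hv.continuousOn_fderiv_of_isOpen hU le_rfl).mono hKU
  refine hK.le_ciSup_of_continuousOn
    (g := fun z => max |fderiv ℝ v z (1, 0)| |fderiv ℝ v z (0, 1)|) ?_ hx
  exact ((ContinuousLinearMap.apply ℝ ℝ (1, 0)).continuous.comp_continuousOn hDv).abs.sup
    ((ContinuousLinearMap.apply ℝ ℝ (0, 1)).continuous.comp_continuousOn hDv).abs

lemma Convex.abs_sub_le_of_abs_fderiv_apply_le {v : ℝ × ℝ → ℝ} {K : Set (ℝ × ℝ)} {M : ℝ}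
    (hK : Convex ℝ K) (hv : ∀ x ∈ K, DifferentiableAt ℝ v x)
    (hM : ∀ x ∈ K, max |fderiv ℝ v x (1, 0)| |fderiv ℝ v x (0, 1)| ≤ M)
    {a b : ℝ × ℝ} (ha : a ∈ K) (hb : b ∈ K) :
    |v b - v a| ≤ 2 * M * ‖b - a‖ := by
  refine hK.norm_image_sub_le_of_norm_fderiv_le hv (fun x hx => ?_) ha hb
  calc ‖fderiv ℝ v x‖ ≤ |fderiv ℝ v x (1, 0)| + |fderiv ℝ v x (0, 1)| :=
        (fderiv ℝ v x).opNorm_prod_le_norm_apply_add_norm_apply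
    _ ≤ M + M := add_le_add ((le_max_left _ _).trans (hM x hx))
        ((le_max_right _ _).trans (hM x hx))
    _ = 2 * M := by ring

lemma norm_mul_mk_le_of_sq_add_sq_eq_one {r s t : ℝ} (hr : 0 ≤ r) (hst : s ^ 2 + t ^ 2 = 1) :
    ‖(r * s, r * t)‖ ≤ r := by
  simp only [Prod.norm_def, norm_mul, norm_of_nonneg hr]
  exact max_le (mul_le_of_le_one_right hr ((sq_le_one_iff_abs_le_one s).1 (by nlinarith)))
    (mul_le_of_le_one_right hr ((sq_le_one_iff_abs_le_one t).1 (by nlinarith)))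

lemma max_abs_coeff_le_of_interpolation {h₁ h₂ s t L P Q R a₁ a₂ a₃ : ℝ} (hh₁ : 0 < h₁)
    (hh₂ : 0 < h₂) (hst : s ^ 2 + t ^ 2 = 1) (ht : 0 < t)
    (h₂₁ : |a₂ - a₁| ≤ L * h₁) (h₃₁ : |a₃ - a₁| ≤ L * h₂)
    (hI₁ : P * 0 + Q * 0 + R = a₁) (hI₂ : P * h₁ + Q * 0 + R = a₂)
    (hI₃ : P * (h₂ * s) + Q * (h₂ * t) + R = a₃) :
    max |P| |Q| ≤ 2 / t * L := by
  have ht₁ : t ≤ 1 := by nlinarith [sq_nonneg s]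
  have hs₁ : |s| ≤ 1 := abs_le.2 ⟨by nlinarith, by nlinarith⟩
  have hP : |P| * h₁ ≤ L * h₁ := by
    rwa [← abs_of_pos hh₁, ← abs_mul, show P * h₁ = a₂ - a₁ by linarith, abs_of_pos hh₁]
  have hL : |P| ≤ L := le_of_mul_le_mul_right hP hh₁
  have hL₀ : 0 ≤ L := (abs_nonneg P).trans hL
  have hQ : |Q| * (h₂ * t) ≤ 2 * L * h₂ :=
    calc |Q| * (h₂ * t) = |(a₃ - a₁) - P * (h₂ * s)| := by
          rw [← abs_of_pos (by positivity : 0 < h₂ * t), ← abs_mul]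
          congr 1
          linarith
      _ ≤ |a₃ - a₁| + |P| * (h₂ * |s|) := by
          grw [abs_sub, abs_mul, abs_mul, abs_of_pos hh₂]
      _ ≤ L * h₂ + L * (h₂ * 1) := by gcongr
      _ = 2 * L * h₂ := by ring
  refine max_le ?_ ?_
  · rw [div_mul_eq_mul_div, le_div_iff₀ ht]
    nlinarith [abs_nonneg P]
  · rw [div_mul_eq_mul_div, le_div_iff₀ ht]
    nlinarith

theorem lagrange_interpolation_stability_general
    (h₁ h₂ s t : ℝ) (hh₂ : 0 < h₂) (hh : h₂ ≤ h₁) (hst : s ^ 2 + t ^ 2 = 1) (ht : 0 < t)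
    (p₁ p₂ p₃ : ℝ × ℝ) (hp₁ : p₁ = (0, 0)) (hp₂ : p₂ = (h₁, 0))
    (hp₃ : p₃ = (h₂ * s, h₂ * t))
    (K : Set (ℝ × ℝ)) (hK : K = convexHull ℝ {p₁, p₂, p₃})
    (θK : ℝ) (hθ : θK = vecAngle (p₂ - p₁) (p₃ - p₁))
    (v : ℝ × ℝ → ℝ) (U : Set (ℝ × ℝ)) (hU : IsOpen U) (hKU : K ⊆ U)
    (hv : ContDiffOn ℝ 1 v U)
    (P Q R : ℝ)
    (hI₁ : P * p₁.1 + Q * p₁.2 + R = v p₁)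
    (hI₂ : P * p₂.1 + Q * p₂.2 + R = v p₂)
    (hI₃ : P * p₃.1 + Q * p₃.2 + R = v p₃) :
    max |P| |Q| ≤ 4 / Real.sin θK *
      ⨆ z : K, max |fderiv ℝ v (z : ℝ × ℝ) (1, 0)| |fderiv ℝ v (z : ℝ × ℝ) (0, 1)| := by
  have hh₁ : 0 < h₁ := hh₂.trans_le hh
  set M := ⨆ z : K, max |fderiv ℝ v (z : ℝ × ℝ) (1, 0)| |fderiv ℝ v (z : ℝ × ℝ) (0, 1)|
  have hpK : ∀ p ∈ ({p₁, p₂, p₃} : Set (ℝ × ℝ)), p ∈ K :=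
    fun p hp => hK ▸ subset_convexHull ℝ _ hp
  have hM : ∀ x ∈ K, max |fderiv ℝ v x (1, 0)| |fderiv ℝ v x (0, 1)| ≤ M := fun x hx =>
    hv.max_abs_fderiv_apply_le_iSup hU (hK ▸ (Set.toFinite _).isCompact_convexHull ℝ) hKU hx
  have hM₀ : 0 ≤ M := (abs_nonneg _).trans ((le_max_left _ _).trans (hM p₁ (hpK _ (by simp))))
  have hLip : ∀ a ∈ K, ∀ b ∈ K, |v b - v a| ≤ 2 * M * ‖b - a‖ := fun a ha b hb =>
    (hK ▸ convex_convexHull ℝ _ : Convex ℝ K).abs_sub_le_of_abs_fderiv_apply_le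
      (fun x hx => (hv.differentiableOn one_ne_zero x (hKU hx)).differentiableAt
        (hU.mem_nhds (hKU hx))) hM ha hb
  have h₂₁ := hLip p₁ (hpK _ (by simp)) p₂ (hpK _ (by simp))
  have h₃₁ := hLip p₁ (hpK _ (by simp)) p₃ (hpK _ (by simp))
  subst hp₁ hp₂ hp₃ hθ
  simp only [Prod.mk_zero_zero, sub_zero] at hI₁ hI₂ hI₃ h₂₁ h₃₁ ⊢
  rw [Prod.norm_mk, norm_zero, max_eq_left (norm_nonneg _), norm_of_nonneg hh₁.le] at h₂₁
  grw [norm_mul_mk_le_of_sq_add_sq_eq_one hh₂.le hst] at h₃₁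
  rw [sin_vecAngle_of_sq_add_sq_eq_one hh₁ hh₂ hst ht.le]
  calc max |P| |Q| ≤ 2 / t * (2 * M) :=
        max_abs_coeff_le_of_interpolation hh₁ hh₂ hst ht h₂₁ h₃₁ hI₁ hI₂ hI₃
    _ = 4 / t * M := by ring

/-- Stability of Lagrange interpolation under the maximum angle condition: for the
triangle `K` with vertices `p₁ = (0,0)`, `p₂ = (h₁,0)`, `p₃ = (h₂ s, h₂ t)` (the image of
the right triangle `K₁` with legs `h₁ ≥ h₂ > 0` under `A = !![1,s;0,t]`, `s²+t²=1`,
`t > 0`), whose maximum inner angle `θ_K` is at the vertex `p₁`, the Lagrange interpolant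
`I_K^L v : (x,y) ↦ P x + Q y + R` (agreeing with `v` at the vertices) satisfies
`|I_K^L v|_{1,∞,K} ≤ (4 / sin θ_K) |v|_{1,∞,K}`. -/
theorem lagrange_interpolation_stability
    (h₁ h₂ s t : ℝ) (hh₂ : 0 < h₂) (hh : h₂ ≤ h₁) (hst : s ^ 2 + t ^ 2 = 1) (ht : 0 < t)
    (p₁ p₂ p₃ : ℝ × ℝ) (hp₁ : p₁ = (0, 0)) (hp₂ : p₂ = (h₁, 0))
    (hp₃ : p₃ = (h₂ * s, h₂ * t))
    (K : Set (ℝ × ℝ)) (hK : K = convexHull ℝ {p₁, p₂, p₃})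
    (θK : ℝ) (hθ : θK = vecAngle (p₂ - p₁) (p₃ - p₁))
    (hmax₂ : vecAngle (p₁ - p₂) (p₃ - p₂) ≤ θK)
    (hmax₃ : vecAngle (p₁ - p₃) (p₂ - p₃) ≤ θK)
    (v : ℝ × ℝ → ℝ) (U : Set (ℝ × ℝ)) (hU : IsOpen U) (hKU : K ⊆ U)
    (hv : ContDiffOn ℝ 1 v U)
    (P Q R : ℝ)
    (hI₁ : P * p₁.1 + Q * p₁.2 + R = v p₁)
    (hI₂ : P * p₂.1 + Q * p₂.2 + R = v p₂)
    (hI₃ : P * p₃.1 + Q * p₃.2 + R = v p₃) :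
    max |P| |Q| ≤ 4 / Real.sin θK *
      ⨆ z : K, max |fderiv ℝ v (z : ℝ × ℝ) (1, 0)| |fderiv ℝ v (z : ℝ × ℝ) (0, 1)| :=
  lagrange_interpolation_stability_general h₁ h₂ s t hh₂ hh hst ht p₁ p₂ p₃ hp₁ hp₂ hp₃ K hK θK hθ v
    U hU hKU hv P Q R hI₁ hI₂ hI₃
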